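/- arXiv:2409.15960 — 5 statements merged into one kernel-verified Lean document; each statement's English description precedes it below -/
import Mathlib

section
/- Let V be an n-dimensional vector space over the finite field F_q and let G₀ ≤ GL(V) act irreducibly on V and contain all scalar matrices. Then for every nonzero u ∈ V, every vector of V can be written as a sum of at most n elements of the orbit u^{G₀}. Consequently every orbital graph of the affine group V⋊G₀ has diameter at most n. -/
/-!
The orbit `u^{G₀}` of a nonzero vector spans a `G₀`-invariant subspace, hence spans `V` by
irreducibility, and so contains a basis `b₁, …, bₙ`. Writing `v = ∑ cᵢ bᵢ` and dropping the
zero coefficients, each remaining term `cᵢ bᵢ` is the image of `bᵢ` under a scalar matrix in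
`G₀`, hence lies in the orbit.
-/

open Module Submodule MulAction

theorem Finset.exists_fin_sum_eq_sum {ι M : Type*} [AddCommMonoid M] {S : Set M}
    (t : Finset ι) (g : ι → M) (hg : ∀ i ∈ t, g i ∈ S) :
    ∃ f : Fin t.card → M, (∀ j, f j ∈ S) ∧ ∑ j, f j = ∑ i ∈ t, g i :=
  ⟨fun j => g (t.equivFin.symm j), fun j => hg _ (t.equivFin.symm j).2, by
    rw [Equiv.sum_comp t.equivFin.symm (fun i => g i), Finset.sum_coe_sort]⟩

section

variable {K V : Type*} [DivisionRing K] [AddCommGroup V] [Module K V] {S : Set V}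

theorem Module.Basis.exists_fin_sum_eq {ι : Type*} [Fintype ι] (b : Basis ι K V)
    (hS : ∀ c : K, c ≠ 0 → ∀ i, c • b i ∈ S) (v : V) :
    ∃ k ≤ Fintype.card ι, ∃ f : Fin k → V, (∀ j, f j ∈ S) ∧ ∑ j, f j = v := by
  classical
  obtain ⟨f, hfS, hf⟩ := (b.repr v).support.exists_fin_sum_eq_sum (S := S)
    (fun i => b.repr v i • b i) fun i hi => hS _ (Finsupp.mem_support_iff.mp hi) i
  refine ⟨_, Finset.card_le_univ _, f, hfS, ?_⟩
  rw [hf]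
  exact b.linearCombination_repr v

theorem exists_fin_sum_eq_of_span_eq_top [FiniteDimensional K V]
    (hspan : span K S = ⊤) (hS : ∀ c : K, c ≠ 0 → ∀ x ∈ S, c • x ∈ S) (v : V) :
    ∃ k ≤ finrank K V, ∃ f : Fin k → V, (∀ j, f j ∈ S) ∧ ∑ j, f j = v := by
  let b := Basis.ofSpan hspan.ge
  have := FiniteDimensional.fintypeBasisIndex b
  rw [finrank_eq_card_basis b]
  exact b.exists_fin_sum_eq (fun c hc i => hS c hc _ (Basis.ofSpan_subset hspan.ge ⟨i, rfl⟩)) v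

end

section

variable {K V : Type*} [Semiring K] [AddCommGroup V] [Module K V] {G₀ : Subgroup (V ≃ₗ[K] V)}

theorem smul_mem_orbit_of_scalar (hscal : ∀ c : K, c ≠ 0 → ∃ g ∈ G₀, ∀ v : V, g v = c • v)
    {u w : V} (hw : w ∈ orbit G₀ u) {c : K} (hc : c ≠ 0) : c • w ∈ orbit G₀ u := by
  obtain ⟨g, hg, hgc⟩ := hscal c hc
  simpa [hgc] using mem_orbit_of_mem_orbit (⟨g, hg⟩ : G₀) hw

theorem apply_mem_span_orbit {u w : V} (hw : w ∈ span K (orbit G₀ u)) {g : V ≃ₗ[K] V}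
    (hg : g ∈ G₀) : g w ∈ span K (orbit G₀ u) :=
  (map_span_le g.toLinearMap _ _).mpr
    (fun _ hx => subset_span (mem_orbit_of_mem_orbit (⟨g, hg⟩ : G₀) hx)) (mem_map_of_mem hw)

theorem span_orbit_eq_top
    (hirr : ∀ W : Submodule K V, (∀ g ∈ G₀, ∀ w ∈ W, g w ∈ W) → W = ⊥ ∨ W = ⊤)
    {u : V} (hu : u ≠ 0) : span K (orbit G₀ u) = ⊤ := by
  refine (hirr _ fun g hg w hw => apply_mem_span_orbit hw hg).resolve_left fun h => hu ?_
  simpa [h] using subset_span (R := K) (mem_orbit_self (M := G₀) u)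

end

theorem stmt1_general (F : Type*) [Field F]
    (V : Type*) [AddCommGroup V] [Module F V] [FiniteDimensional F V]
    (n : ℕ) (hn : Module.finrank F V = n)
    (G₀ : Subgroup (V ≃ₗ[F] V))
    (hirr : ∀ W : Submodule F V, (∀ g ∈ G₀, ∀ w ∈ W, g w ∈ W) → W = ⊥ ∨ W = ⊤)
    (hscal : ∀ c : F, c ≠ 0 → ∃ g ∈ G₀, ∀ v : V, g v = c • v)
    (u : V) (hu : u ≠ 0) (v : V) :
    ∃ k ≤ n, ∃ f : Fin k → V, (∀ i, f i ∈ MulAction.orbit G₀ u) ∧ ∑ i, f i = v :=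
  hn ▸ exists_fin_sum_eq_of_span_eq_top (span_orbit_eq_top hirr hu)
    (fun _ hc _ hw => smul_mem_orbit_of_scalar hscal hw hc) v

/-- Let `V` be an `n`-dimensional vector space over a finite field and let
`G₀ ≤ GL(V)` act irreducibly on `V` and contain all scalar matrices.  Then for every
nonzero `u ∈ V`, every vector of `V` can be written as a sum of at most `n` elements of
the orbit `u^{G₀}`. -/
theorem stmt1 (F : Type*) [Field F] [Fintype F]
    (V : Type*) [AddCommGroup V] [Module F V] [FiniteDimensional F V]
    (n : ℕ) (hn : Module.finrank F V = n)
    (G₀ : Subgroup (V ≃ₗ[F] V))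
    (hirr : ∀ W : Submodule F V, (∀ g ∈ G₀, ∀ w ∈ W, g w ∈ W) → W = ⊥ ∨ W = ⊤)
    (hscal : ∀ c : F, c ≠ 0 → ∃ g ∈ G₀, ∀ v : V, g v = c • v)
    (u : V) (hu : u ≠ 0) (v : V) :
    ∃ k ≤ n, ∃ f : Fin k → V, (∀ i, f i ∈ MulAction.orbit G₀ u) ∧ ∑ i, f i = v :=
  stmt1_general F V n hn G₀ hirr hscal u hu v
end

section
/- Let F_q be a finite field of characteristic p with 3 | q (so p = 3), and let V be the space of 3×3 traceless matrices over F_q. Then there exists A ∈ V such that A + αI₃ has rank 3 for all α ∈ F_q. Consequently, the coset A + F_q·I₃ in V/⟨I₃⟩ contains no matrix of rank less than 3, and A + F_q·I₃ cannot be written as a sum of two cosets each containing a rank-1 traceless matrix. -/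
/-!
On a finite field `x ↦ x - x³` is not injective (it kills `0` and `1`), hence not surjective;
for `c` outside its image the cubic `X³ - X - c` has no root. Its companion matrix `A` is
traceless, and `det (A + α • 1) = α³ - α + c ≠ 0`, so every `A + α • 1` is invertible.
A sum of two rank-one matrices has rank at most `2`, so `A` is not `B + C + α • 1` with
`B`, `C` of rank one.
-/

open Matrix

theorem Matrix.rank_add_le {m n K : Type*} [Fintype n] [Field K] (A B : Matrix m n K) :
    (A + B).rank ≤ A.rank + B.rank := by
  have hrange : LinearMap.range (A + B).mulVecLin ≤
      LinearMap.range A.mulVecLin ⊔ LinearMap.range B.mulVecLin := by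
    rintro _ ⟨v, rfl⟩
    rw [mulVecLin_add]
    exact Submodule.add_mem_sup ⟨v, rfl⟩ ⟨v, rfl⟩
  exact (Submodule.finrank_mono hrange).trans (Submodule.finrank_add_le_finrank_add_finrank _ _)

theorem exists_forall_sub_pow_three_ne (F : Type*) [Field F] [Finite F] :
    ∃ c : F, ∀ x : F, x - x ^ 3 ≠ c := by
  by_contra! hsurj
  have hinj : Function.Injective (fun x : F => x - x ^ 3) :=
    Finite.injective_iff_surjective.2 hsurj
  exact zero_ne_one (hinj (by ring) : (0 : F) = 1)

section CubicCompanion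

variable {F : Type*} [Field F]

/-- The companion matrix of `X³ - X - c`. -/
def cubicCompanion (c : F) : Matrix (Fin 3) (Fin 3) F :=
  !![0, 0, c; 1, 0, 1; 0, 1, 0]

theorem trace_cubicCompanion (c : F) : (cubicCompanion c).trace = 0 := by
  simp [cubicCompanion, trace_fin_three]

theorem det_cubicCompanion_add_smul_one (c α : F) :
    (cubicCompanion c + α • 1).det = α ^ 3 - α + c := by
  rw [det_fin_three]
  simp [cubicCompanion, one_apply]
  ring

theorem rank_cubicCompanion_add_smul_one {c : F} (hc : ∀ x : F, x - x ^ 3 ≠ c) (α : F) :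
    (cubicCompanion c + α • 1).rank = 3 := by
  have hdet : (cubicCompanion c + α • 1).det ≠ 0 := by
    rw [det_cubicCompanion_add_smul_one]
    exact fun h => hc α (by linear_combination -h)
  simpa using rank_of_isUnit _ ((isUnit_iff_isUnit_det _).2 hdet.isUnit)

end CubicCompanion

theorem stmt8_general (F : Type*) [Field F] [Fintype F] :
    ∃ A : Matrix (Fin 3) (Fin 3) F, A.trace = 0 ∧
      (∀ α : F, (A + α • (1 : Matrix (Fin 3) (Fin 3) F)).rank = 3) ∧
      (∀ α : F, ¬ (A + α • (1 : Matrix (Fin 3) (Fin 3) F)).rank < 3) ∧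
      ¬ ∃ (B C : Matrix (Fin 3) (Fin 3) F) (α : F),
          B.trace = 0 ∧ C.trace = 0 ∧ B.rank = 1 ∧ C.rank = 1 ∧
          A = B + C + α • (1 : Matrix (Fin 3) (Fin 3) F) := by
  obtain ⟨c, hc⟩ := exists_forall_sub_pow_three_ne F
  have hrank := rank_cubicCompanion_add_smul_one hc
  refine ⟨cubicCompanion c, trace_cubicCompanion c, hrank, fun α => by simp [hrank α], ?_⟩
  rintro ⟨B, C, α, -, -, hB, hC, hA⟩
  have hsum : cubicCompanion c + (-α) • (1 : Matrix (Fin 3) (Fin 3) F) = B + C := by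
    rw [hA]
    module
  have hle : (B + C).rank ≤ 2 := (rank_add_le B C).trans (by rw [hB, hC])
  rw [← hsum, hrank] at hle
  omega

/-- Let `F_q` be a finite field with `3 ∣ q` (characteristic `3`).
Then there is a traceless `3 × 3` matrix `A` over `F_q` such that `A + α·I` has rank
`3` for every `α ∈ F_q`.  Consequently the coset `A + F_q·I` contains no matrix of
rank less than `3`, and `A + F_q·I` cannot be written as a sum of two cosets each
containing a rank-one traceless matrix. -/
theorem stmt8 (F : Type*) [Field F] [Fintype F] (h3 : 3 ∣ Fintype.card F) :
    ∃ A : Matrix (Fin 3) (Fin 3) F, A.trace = 0 ∧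
      (∀ α : F, (A + α • (1 : Matrix (Fin 3) (Fin 3) F)).rank = 3) ∧
      (∀ α : F, ¬ (A + α • (1 : Matrix (Fin 3) (Fin 3) F)).rank < 3) ∧
      ¬ ∃ (B C : Matrix (Fin 3) (Fin 3) F) (α : F),
          B.trace = 0 ∧ C.trace = 0 ∧ B.rank = 1 ∧ C.rank = 1 ∧
          A = B + C + α • (1 : Matrix (Fin 3) (Fin 3) F) :=
  stmt8_general F
end

section
/- Let n ≥ 3, q a prime power, and let B be a nondegenerate Hermitian form on V = F_{q²}^n (Hermitian with respect to x ↦ x^q). For λ ∈ F_q, let O_λ = {v ∈ V∖{0} : B(v,v) = λ}. Then for every fixed λ and every u ∈ V, u can be written as a sum of two vectors in O_λ. In particular, taking G₀ = GU_n(q), every orbital graph of the affine group V⋊G₀ has diameter at most 2. -/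
/-!
Let `σ x = x ^ q`, the involution of `K` whose fixed field has order `q`. The trace `a + σ a` and
the norm `a * σ a` map `K` onto the fixed field: their fibres are root sets of polynomials of
degree `q` and `q + 1`, which leaves no room for a missed value.

For `u ≠ 0` and `s ≠ 0` there is a `v` with `B v v = λ` and `B v u = s`: if `u` is anisotropic
take `v = (s / B u u) • u + z` with `z ⊥ u` of suitable norm (the nondegenerate space `u⊥`
contains an anisotropic vector, and rescaling it realises every norm); if `u` is isotropic take
`v = a • u + s • f` with `f` a hyperbolic partner of `u`. Now choose `s ∉ {0, B u u}` with
`s + σ s = B u u`; then `w = u - v` has `B w w = B u u - σ s - s + λ = λ`, and `v, w ≠ 0` since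
`B v u = s` and `B w u = B u u - s`.
-/

open Finset Polynomial Module

theorem Finset.exists_eq_of_card_fiber_le {α β : Type*} [Fintype α] [DecidableEq β] {f : α → β}
    {S : Finset β} {m : ℕ} (hfS : ∀ x, f x ∈ S) (hfib : ∀ t, #{x | f x = t} ≤ m)
    (hcard : m * (#S - 1) < Fintype.card α) {t : β} (ht : t ∈ S) : ∃ x, f x = t := by
  have hle : Fintype.card α ≤ m * #(univ.image f) :=
    card_le_mul_card_image univ m fun b _ => hfib b
  have himage : univ.image f = S := by
    refine eq_of_subset_of_card_le (fun _ hy => ?_) ?_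
    · obtain ⟨x, -, rfl⟩ := mem_image.1 hy
      exact hfS x
    · have := Nat.lt_of_mul_lt_mul_left (hcard.trans_le hle)
      omega
  obtain ⟨x, -, hx⟩ := mem_image.1 (himage ▸ ht)
  exact ⟨x, hx⟩

theorem card_filter_pow_add_eval_eq_zero_le {K : Type*} [Field K] [Fintype K] [DecidableEq K]
    {m : ℕ} {Q : K[X]} (hQ : Q.degree < m) : #{x | x ^ m + Q.eval x = 0} ≤ m := by
  have hmonic := monic_X_pow_add hQ
  calc #{x | x ^ m + Q.eval x = 0}
      ≤ (X ^ m + Q).natDegree := card_le_degree_of_subset_roots fun x hx => by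
        simp only [mem_val, mem_filter, mem_univ, true_and] at hx
        simp [mem_roots hmonic.ne_zero, hx]
    _ = m := by rw [natDegree_add_eq_left_of_degree_lt (by simpa using hQ), natDegree_X_pow]

section FiniteField

variable {K : Type*} [Field K] [Fintype K] {q : ℕ}

theorem two_le_of_card_eq_sq (hcard : Fintype.card K = q ^ 2) : 2 ≤ q := by
  have := hcard ▸ Fintype.one_lt_card (α := K)
  by_contra! h
  interval_cases q <;> simp at this

theorem exists_ringHom_eq_pow (hcard : Fintype.card K = q ^ 2) :
    ∃ σ : K →+* K, ∀ x, σ x = x ^ q := by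
  obtain ⟨p, k, hp, -, rfl⟩ :=
    (isPrimePow_pow_iff two_ne_zero).1 (hcard ▸ FiniteField.isPrimePow_card K)
  have : Fact p.Prime := ⟨Nat.prime_iff.2 hp⟩
  have : CharP K p := charP_of_card_eq_prime_pow (f := k * 2) (by rw [hcard, pow_mul])
  exact ⟨iterateFrobenius K p k, fun x => iterateFrobenius_def p k x⟩

theorem pow_pow_of_card_eq_sq (hcard : Fintype.card K = q ^ 2) (x : K) : (x ^ q) ^ q = x := by
  rw [← pow_mul, ← sq, ← hcard, FiniteField.pow_card]

theorem card_filter_pow_eq_self_le [DecidableEq K] (hq : 2 ≤ q) : #{x : K | x ^ q = x} ≤ q := by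
  have hdeg : (-X : K[X]).degree < q := by
    rw [degree_neg, degree_X]; exact_mod_cast hq
  simpa [← sub_eq_add_neg, sub_eq_zero] using card_filter_pow_add_eval_eq_zero_le hdeg

theorem mul_card_filter_pow_eq_self_sub_one_lt [DecidableEq K] (hcard : Fintype.card K = q ^ 2)
    {m : ℕ} (hm : m ≤ q + 1) : m * (#{x : K | x ^ q = x} - 1) < Fintype.card K := by
  have hq := two_le_of_card_eq_sq hcard
  calc m * (#{x : K | x ^ q = x} - 1) ≤ (q + 1) * (q - 1) := by
        gcongr
        exact card_filter_pow_eq_self_le hq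
    _ < Fintype.card K := by
        rw [hcard]
        zify [hq, show 1 ≤ q by omega]
        nlinarith

theorem exists_pow_ne (hcard : Fintype.card K = q ^ 2) : ∃ c : K, c ^ q ≠ c := by
  classical
  by_contra! h
  have hq := two_le_of_card_eq_sq hcard
  have := card_filter_pow_eq_self_le (K := K) hq
  simp [h, hcard] at this
  nlinarith

theorem exists_add_pow_eq (hcard : Fintype.card K = q ^ 2) {t : K} (ht : t ^ q = t) :
    ∃ a, a + a ^ q = t := by
  classical
  obtain ⟨σ, hσ⟩ := exists_ringHom_eq_pow hcard
  have hq := two_le_of_card_eq_sq hcard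
  refine exists_eq_of_card_fiber_le (S := {x | x ^ q = x}) (m := q) (fun x => ?_) (fun s => ?_)
    ?_ (by simpa using ht)
  · rw [mem_filter, ← hσ (x + x ^ q), map_add, hσ, hσ, pow_pow_of_card_eq_sq hcard, add_comm]
    exact ⟨mem_univ _, rfl⟩
  · have hdeg : (X - C s).degree < (q : WithBot ℕ) := by
      rw [degree_X_sub_C]; exact_mod_cast hq
    convert card_filter_pow_add_eval_eq_zero_le hdeg using 3 with x
    simp only [eval_sub, eval_X, eval_C]
    constructor <;> intro h <;> linear_combination h
  · exact mul_card_filter_pow_eq_self_sub_one_lt hcard (by omega)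

theorem exists_mul_pow_eq (hcard : Fintype.card K = q ^ 2) {t : K} (ht : t ^ q = t) :
    ∃ a, a * a ^ q = t := by
  classical
  refine exists_eq_of_card_fiber_le (S := {x | x ^ q = x}) (m := q + 1) (fun x => ?_)
    (fun s => ?_) ?_ (by simpa using ht)
  · simp only [mem_filter, mem_univ, true_and, mul_pow, pow_pow_of_card_eq_sq hcard]
    ring
  · have hdeg : (-C s).degree < (q + 1 : ℕ) := by
      rw [degree_neg]
      exact degree_C_le.trans_lt (by exact_mod_cast Nat.succ_pos q)
    convert card_filter_pow_add_eval_eq_zero_le hdeg using 3 with x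
    simp only [eval_neg, eval_C, pow_succ']
    constructor <;> intro h <;> linear_combination h
  · exact mul_card_filter_pow_eq_self_sub_one_lt hcard le_rfl

end FiniteField

theorem RingHom.exists_ne_zero_ne_add_eq {K : Type*} [Field K] {σ : K →+* K}
    (hσ : Function.Involutive σ) (hσ1 : σ ≠ RingHom.id K)
    (htr : ∀ t, σ t = t → ∃ a, a + σ a = t) {t : K} (ht : σ t = t) :
    ∃ s, s ≠ 0 ∧ s ≠ t ∧ s + σ s = t := by
  by_cases ht0 : t = 0
  · obtain ⟨c, hc⟩ : ∃ c, σ c ≠ c := by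
      by_contra! h
      exact hσ1 (RingHom.ext h)
    refine ⟨c - σ c, sub_ne_zero.2 hc.symm, ht0 ▸ sub_ne_zero.2 hc.symm, ?_⟩
    rw [map_sub, hσ, ht0]
    ring
  · obtain ⟨s, hs⟩ := htr t ht
    refine ⟨s, fun h => ht0 ?_, fun h => ht0 ?_, hs⟩
    · simpa [h] using hs.symm
    · subst h
      simpa [ht] using hs

section Hermitian

variable {K V : Type*} [Field K] [AddCommGroup V] [Module K V] {σ : K →+* K}
  {B : V →ₗ[K] V →ₛₗ[σ] K}

theorem exists_apply_smul_add_smul_self_ne_zero (hσ : Function.Involutive σ)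
    (htr : ∀ t, σ t = t → ∃ a, a + σ a = t) (hB : ∀ x y, σ (B x y) = B y x) {z w : V}
    (hzw : B z w ≠ 0) : ∃ a b : K, B (a • z + b • w) (a • z + b • w) ≠ 0 := by
  obtain hz | hz := ne_or_eq (B z z) 0
  · exact ⟨1, 0, by simpa using hz⟩
  obtain hw | hw := ne_or_eq (B w w) 0
  · exact ⟨0, 1, by simpa using hw⟩
  obtain ⟨r, hr⟩ := htr 1 (map_one σ)
  -- `b` is chosen so that `σ b * B z w = r`, making the norm of `z + b • w` the trace `r + σ r`
  refine ⟨1, σ (r / B z w), ?_⟩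
  rw [one_smul]
  suffices B (z + σ (r / B z w) • w) (z + σ (r / B z w) • w) = 1 by
    rw [this]; exact one_ne_zero
  have hrw : r / B z w * B z w = r := div_mul_cancel₀ r hzw
  have hσrw : σ (r / B z w) * σ (B z w) = σ r := by rw [← map_mul, hrw]
  simp only [map_add, map_smul, LinearMap.add_apply, LinearMap.smul_apply,
    map_smulₛₗ, smul_eq_mul, hz, hw, hσ _, ← hB z w, zero_add, mul_zero, add_zero]
  linear_combination hr + hσrw + hrw

theorem exists_apply_eq_zero_apply_self_ne_zero (hσ : Function.Involutive σ)
    (htr : ∀ t, σ t = t → ∃ a, a + σ a = t) (hB : ∀ x y, σ (B x y) = B y x)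
    (hsep : B.SeparatingLeft) (hV : 1 < finrank K V) {u : V} (hu : B u u ≠ 0) :
    ∃ z, B z u = 0 ∧ B z z ≠ 0 := by
  set proj : V → V := fun y => y - (B y u / B u u) • u
  have hproj (y : V) : B (proj y) u = 0 := by
    simp [proj, div_mul_cancel₀ _ hu]
  obtain ⟨y, hy⟩ := exists_linearIndependent_pair_of_one_lt_finrank hV
    (fun h : u = 0 => hu (by simp [h]))
  have hz : proj y ≠ 0 := fun h => by
    refine one_ne_zero (LinearIndependent.pair_iff.1 hy (-(B y u / B u u)) 1 ?_).2
    rwa [one_smul, neg_smul, neg_add_eq_sub]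
  obtain ⟨w, hw⟩ : ∃ w, B (proj y) w ≠ 0 := by
    by_contra! h
    exact hz (hsep _ h)
  have hzw : B (proj y) (proj w) = B (proj y) w := by
    rw [map_sub, map_smulₛₗ, hproj, smul_zero, sub_zero]
  obtain ⟨a, b, hab⟩ := exists_apply_smul_add_smul_self_ne_zero hσ htr hB (hzw ▸ hw)
  exact ⟨a • proj y + b • proj w, by simp [hproj], hab⟩

theorem exists_apply_eq_zero_apply_self_eq (hσ : Function.Involutive σ)
    (htr : ∀ t, σ t = t → ∃ a, a + σ a = t) (hnorm : ∀ t, σ t = t → ∃ a, a * σ a = t)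
    (hB : ∀ x y, σ (B x y) = B y x) (hsep : B.SeparatingLeft) (hV : 1 < finrank K V) {u : V}
    (hu : B u u ≠ 0) {t : K} (ht : σ t = t) : ∃ z, B z u = 0 ∧ B z z = t := by
  obtain ⟨z, hzu, hzz⟩ := exists_apply_eq_zero_apply_self_ne_zero hσ htr hB hsep hV hu
  obtain ⟨c, hc⟩ := hnorm (t / B z z) (by rw [map_div₀, ht, hB])
  refine ⟨c • z, by simp [hzu], ?_⟩
  simp only [map_smul, LinearMap.smul_apply, map_smulₛₗ, smul_eq_mul]
  rw [← mul_assoc, mul_comm (σ c), hc, div_mul_cancel₀ t hzz]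

theorem exists_apply_eq_one_apply_self_eq_zero (htr : ∀ t, σ t = t → ∃ a, a + σ a = t)
    (hB : ∀ x y, σ (B x y) = B y x) (hsep : B.SeparatingLeft) {u : V} (hu : u ≠ 0)
    (huu : B u u = 0) : ∃ f, B f u = 1 ∧ B f f = 0 := by
  obtain ⟨w, hw⟩ : ∃ w, B w u ≠ 0 := by
    by_contra! h
    exact hu (hsep u fun w => by rw [← hB, h, map_zero])
  set f := (B w u)⁻¹ • w
  have hfu : B f u = 1 := by simp [f, hw]
  have huf : B u f = 1 := by rw [← hB, hfu, map_one]
  obtain ⟨r, hr⟩ := htr (-B f f) (by rw [map_neg, hB])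
  refine ⟨f + r • u, by simp [hfu, huu], ?_⟩
  simp only [map_add, map_smul, LinearMap.add_apply, LinearMap.smul_apply, map_smulₛₗ,
    smul_eq_mul, hfu, huf, huu]
  linear_combination hr

theorem exists_apply_self_eq_apply_eq (hσ : Function.Involutive σ)
    (htr : ∀ t, σ t = t → ∃ a, a + σ a = t) (hnorm : ∀ t, σ t = t → ∃ a, a * σ a = t)
    (hB : ∀ x y, σ (B x y) = B y x) (hsep : B.SeparatingLeft) (hV : 1 < finrank K V) {u : V}
    (hu : u ≠ 0) {s : K} (hs : s ≠ 0) {lam : K} (hlam : σ lam = lam) :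
    ∃ v, B v v = lam ∧ B v u = s := by
  by_cases huu : B u u = 0
  · obtain ⟨f, hfu, hff⟩ := exists_apply_eq_one_apply_self_eq_zero htr hB hsep hu huu
    have huf : B u f = 1 := by rw [← hB, hfu, map_one]
    obtain ⟨r, hr⟩ := htr lam hlam
    refine ⟨(r / σ s) • u + s • f, ?_, by simp [huu, hfu]⟩
    have hσs : σ s ≠ 0 := (map_ne_zero σ).2 hs
    simp only [map_add, map_smul, LinearMap.add_apply, LinearMap.smul_apply, map_smulₛₗ,
      smul_eq_mul, huu, hff, huf, hfu, map_div₀, hσ _, mul_zero, mul_one, zero_add, add_zero]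
    rw [div_mul_cancel₀ _ hs, mul_div_cancel₀ _ hσs]
    linear_combination hr
  · set c := s / B u u
    obtain ⟨z, hzu, hzz⟩ := exists_apply_eq_zero_apply_self_eq hσ htr hnorm hB hsep hV huu
      (t := lam - c * σ c * B u u) (by simp only [map_sub, map_mul, hσ _, hB, hlam]; ring)
    have huz : B u z = 0 := by rw [← hB, hzu, map_zero]
    refine ⟨c • u + z, ?_, by simp [hzu, c, div_mul_cancel₀ _ huu]⟩
    simp only [map_add, map_smul, LinearMap.add_apply, LinearMap.smul_apply, map_smulₛₗ,
      smul_eq_mul, hzu, huz, hzz]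
    ring

theorem exists_add_eq_of_apply_self_eq (hσ : Function.Involutive σ) (hσ1 : σ ≠ RingHom.id K)
    (htr : ∀ t, σ t = t → ∃ a, a + σ a = t) (hnorm : ∀ t, σ t = t → ∃ a, a * σ a = t)
    (hB : ∀ x y, σ (B x y) = B y x) (hsep : B.SeparatingLeft) (hV : 1 < finrank K V) {lam : K}
    (hlam : σ lam = lam) (u : V) :
    ∃ v w, v ≠ 0 ∧ w ≠ 0 ∧ B v v = lam ∧ B w w = lam ∧ u = v + w := by
  have key {u : V} (hu : u ≠ 0) {s : K} (hs : s ≠ 0) :=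
    exists_apply_self_eq_apply_eq hσ htr hnorm hB hsep hV hu hs hlam
  by_cases hu : u = 0
  · have : Nontrivial V := nontrivial_of_finrank_pos (R := K) (by omega)
    obtain ⟨u₀, hu₀⟩ := exists_ne (0 : V)
    obtain ⟨v, hvv, hvu⟩ := key hu₀ one_ne_zero
    have hv : v ≠ 0 := by rintro rfl; simp at hvu
    exact ⟨v, -v, hv, neg_ne_zero.2 hv, hvv, by simpa using hvv, by simp [hu]⟩
  · obtain ⟨s, hs0, hsu, hs⟩ := RingHom.exists_ne_zero_ne_add_eq hσ hσ1 htr (hB u u)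
    obtain ⟨v, hvv, hvu⟩ := key hu hs0
    have hv : v ≠ 0 := by rintro rfl; simp [eq_comm, hs0] at hvu
    have hw : u - v ≠ 0 := fun h => hsu (by rw [← hvu, ← sub_eq_zero.1 h])
    refine ⟨v, u - v, hv, hw, hvv, ?_, by abel⟩
    have huv : B u v = σ s := by rw [← hB, hvu]
    simp only [map_sub, LinearMap.sub_apply, hvv, huv, hvu]
    linear_combination -hs

end Hermitian

theorem stmt10_general (K : Type*) [Field K] [Fintype K] (q : ℕ)
    (hcard : Fintype.card K = q ^ 2)
    (n : ℕ) (hn : 3 ≤ n)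
    (B : (Fin n → K) → (Fin n → K) → K)
    (hadd : ∀ u v w : Fin n → K, B (u + v) w = B u w + B v w)
    (hsmul : ∀ (c : K) (u w : Fin n → K), B (c • u) w = c * B u w)
    (hherm : ∀ u w : Fin n → K, B w u = (B u w) ^ q)
    (hnd : ∀ v : Fin n → K, (∀ w : Fin n → K, B v w = 0) → v = 0)
    (lam : K) (hlam : lam ^ q = lam) (u : Fin n → K) :
    ∃ v w : Fin n → K, v ≠ 0 ∧ w ≠ 0 ∧ B v v = lam ∧ B w w = lam ∧ u = v + w := by
  obtain ⟨σ, hσ⟩ := exists_ringHom_eq_pow hcard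
  have hconj (x y : Fin n → K) : σ (B x y) = B y x := by rw [hσ, ← hherm]
  let B' : (Fin n → K) →ₗ[K] (Fin n → K) →ₛₗ[σ] K :=
    LinearMap.mk₂'ₛₗ (RingHom.id K) σ B hadd hsmul
      (fun x y z => by rw [← hconj, hadd, map_add, hconj, hconj])
      (fun c x y => by rw [← hconj, hsmul, map_mul, hconj, smul_eq_mul])
  have hσσ : Function.Involutive σ := fun x => by rw [hσ, hσ, pow_pow_of_card_eq_sq hcard]
  have hσ1 : σ ≠ RingHom.id K := fun h => by
    obtain ⟨c, hc⟩ := exists_pow_ne hcard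
    exact hc (by rw [← hσ, h, RingHom.id_apply])
  have htr (t : K) (ht : σ t = t) : ∃ a, a + σ a = t := by
    simp only [hσ] at ht ⊢
    exact exists_add_pow_eq hcard ht
  have hnorm (t : K) (ht : σ t = t) : ∃ a, a * σ a = t := by
    simp only [hσ] at ht ⊢
    exact exists_mul_pow_eq hcard ht
  have hV : 1 < finrank K (Fin n → K) := by rw [finrank_fin_fun]; omega
  exact exists_add_eq_of_apply_self_eq (B := B') hσσ hσ1 htr hnorm hconj hnd hV
    (by rw [hσ, hlam]) u

/-- Let `n ≥ 3`, `q` a prime power, and `B` a nondegenerate Hermitian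
form on `V = F_{q²}^n` (Hermitian with respect to `x ↦ x^q`).  For `λ ∈ F_q` let
`O_λ = {v ∈ V ∖ {0} : B(v,v) = λ}`.  Then for every `λ` fixed by `x ↦ x^q` and every
`u ∈ V`, `u` can be written as a sum of two vectors in `O_λ`. -/
theorem stmt10 (K : Type*) [Field K] [Fintype K] (q : ℕ) (hq : IsPrimePow q)
    (hcard : Fintype.card K = q ^ 2)
    (n : ℕ) (hn : 3 ≤ n)
    (B : (Fin n → K) → (Fin n → K) → K)
    (hadd : ∀ u v w : Fin n → K, B (u + v) w = B u w + B v w)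
    (hsmul : ∀ (c : K) (u w : Fin n → K), B (c • u) w = c * B u w)
    (hherm : ∀ u w : Fin n → K, B w u = (B u w) ^ q)
    (hnd : ∀ v : Fin n → K, (∀ w : Fin n → K, B v w = 0) → v = 0)
    (lam : K) (hlam : lam ^ q = lam) (u : Fin n → K) :
    ∃ v w : Fin n → K, v ≠ 0 ∧ w ≠ 0 ∧ B v v = lam ∧ B w w = lam ∧ u = v + w :=
  stmt10_general K q hcard n hn B hadd hsmul hherm hnd lam hlam u
end

section
/- Let q be a prime power and W = F_q^6 the natural module for SL_6(q), and let V = Λ³W of dimension 20. The number of vectors of V expressible as a sum of at most two nonzero simple wedges v₁∧v₂∧v₃ is strictly less than q^{20}. Consequently, not every element of Λ³W is a sum of two simple wedges. -/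
open ExteriorAlgebra

section Aux

variable {F : Type*} [Field F]

/-- The wedge of three vectors in `F^6`. -/
noncomputable def wedge3 (F : Type*) [Field F] (v : Fin 3 → (Fin 6 → F)) :
    ExteriorAlgebra F (Fin 6 → F) :=
  ι F (v 0) * ι F (v 1) * ι F (v 2)

lemma w_xyx (x y : Fin 6 → F) : ι F x * ι F y * ι F x = 0 := by
  have h : ι F x * ι F y = -(ι F y * ι F x) := by
    rw [eq_neg_iff_add_eq_zero]; exact ι_add_mul_swap x y
  rw [h, neg_mul, mul_assoc, ι_sq_zero, mul_zero, neg_zero]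

lemma w_xyy (x y : Fin 6 → F) : ι F x * ι F y * ι F y = 0 := by
  rw [mul_assoc, ι_sq_zero, mul_zero]

/-- Action of a `3×3` matrix on a triple of vectors. -/
noncomputable def act (g : Matrix (Fin 3) (Fin 3) F) (v : Fin 3 → (Fin 6 → F)) :
    Fin 3 → (Fin 6 → F) :=
  fun i => ∑ j, g i j • v j

lemma act_act (A B : Matrix (Fin 3) (Fin 3) F) (v : Fin 3 → (Fin 6 → F)) :
    act (A * B) v = act A (act B v) := by
  funext i
  simp only [act, Matrix.mul_apply, Finset.smul_sum, Finset.sum_smul, smul_smul]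
  rw [Finset.sum_comm]

lemma wedge3_act (g : Matrix (Fin 3) (Fin 3) F) : ∀ (v : Fin 3 → (Fin 6 → F)),
    wedge3 F (act g v) = g.det • wedge3 F v := by
  induction g using Matrix.diagonal_transvection_induction with
  | hdiag D _ =>
    intro v
    have hv : act (Matrix.diagonal D) v = fun i => D i • v i := by
      funext i
      simp [act, Matrix.diagonal_apply, ite_smul, Finset.sum_ite_eq]
    rw [hv]
    simp only [wedge3, map_smul, smul_mul_assoc, mul_smul_comm, smul_smul,
      Matrix.det_diagonal, Fin.prod_univ_three]
    ring_nf
  | htransvec t =>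
    intro v
    obtain ⟨i, j, hij, c⟩ := t
    have hv : act (Matrix.transvection i j c) v
        = fun r => v r + if i = r then c • v j else 0 := by
      funext r
      simp [act, Matrix.transvection, Matrix.add_apply, Matrix.one_apply,
        Matrix.single, add_smul, Finset.sum_add_distrib, ite_smul,
        Finset.sum_ite_eq, ite_and, Finset.sum_ite_eq']
    rw [show Matrix.TransvectionStruct.toMatrix ⟨i,j,hij,c⟩ = Matrix.transvection i j c
        from rfl, hv, Matrix.det_transvection_of_ne _ _ hij, one_smul]
    fin_cases i <;> fin_cases j <;>
      simp_all [wedge3, map_add, map_smul, add_mul, mul_add,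
        smul_mul_assoc, mul_smul_comm, ι_sq_zero, w_xyx, w_xyy]
  | hmul A B hA hB =>
    intro v
    rw [act_act, hA, hB, smul_smul, Matrix.det_mul]

lemma linearIndependent_of_wedge3 (v : Fin 3 → (Fin 6 → F)) (h : wedge3 F v ≠ 0) :
    LinearIndependent F v := by
  by_contra hdep
  obtain ⟨g, hsum, i, hgi⟩ := Fintype.not_linearIndependent_iff.mp hdep
  rw [Fin.sum_univ_three] at hsum
  apply h
  fin_cases i
  · have hA := wedge3_act (Matrix.of ![![g 0, g 1, g 2], ![0,1,0], ![0,0,1]]) v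
    have hrow : act (Matrix.of ![![g 0, g 1, g 2], ![0,1,0], ![0,0,1]]) v
        = ![0, v 1, v 2] := by
      funext k
      fin_cases k <;> simp [act, Fin.sum_univ_three, hsum]
    have hdet : (Matrix.of ![![g 0, g 1, g 2], ![0,1,0], ![0,0,1]]).det = g 0 := by
      simp [Matrix.det_fin_three, Matrix.vecHead, Matrix.vecTail]
    rw [hrow, hdet] at hA
    have hz : wedge3 F ![0, v 1, v 2] = 0 := by simp [wedge3]
    rw [hz] at hA
    exact (smul_eq_zero.mp hA.symm).resolve_left (by simpa using hgi)
  · have hA := wedge3_act (Matrix.of ![![1,0,0], ![g 0, g 1, g 2], ![0,0,1]]) v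
    have hrow : act (Matrix.of ![![1,0,0], ![g 0, g 1, g 2], ![0,0,1]]) v
        = ![v 0, 0, v 2] := by
      funext k
      fin_cases k <;> simp [act, Fin.sum_univ_three, hsum]
    have hdet : (Matrix.of ![![1,0,0], ![g 0, g 1, g 2], ![0,0,1]]).det = g 1 := by
      simp [Matrix.det_fin_three, Matrix.vecHead, Matrix.vecTail]
    rw [hrow, hdet] at hA
    have hz : wedge3 F ![v 0, 0, v 2] = 0 := by simp [wedge3]
    rw [hz] at hA
    exact (smul_eq_zero.mp hA.symm).resolve_left (by simpa using hgi)
  · have hA := wedge3_act (Matrix.of ![![1,0,0], ![0,1,0], ![g 0, g 1, g 2]]) v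
    have hrow : act (Matrix.of ![![1,0,0], ![0,1,0], ![g 0, g 1, g 2]]) v
        = ![v 0, v 1, 0] := by
      funext k
      fin_cases k <;> simp [act, Fin.sum_univ_three, hsum]
    have hdet : (Matrix.of ![![1,0,0], ![0,1,0], ![g 0, g 1, g 2]]).det = g 2 := by
      simp [Matrix.det_fin_three, Matrix.vecHead, Matrix.vecTail]
    rw [hrow, hdet] at hA
    have hz : wedge3 F ![v 0, v 1, 0] = 0 := by simp [wedge3]
    rw [hz] at hA
    exact (smul_eq_zero.mp hA.symm).resolve_left (by simpa using hgi)

lemma act_inj {g g' : Matrix (Fin 3) (Fin 3) F} {w : Fin 3 → (Fin 6 → F)}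
    (hw : LinearIndependent F w) (h : act g w = act g' w) : g = g' := by
  ext i j
  have hi := congrFun h i
  have hz : ∑ j, (g i j - g' i j) • w j = 0 := by
    simp only [sub_smul, Finset.sum_sub_distrib]
    rw [show (∑ j, g i j • w j) = ∑ j, g' i j • w j from hi, sub_self]
  have := Fintype.linearIndependent_iff.mp hw (fun j => g i j - g' i j) hz j
  exact sub_eq_zero.mp this

lemma simple_sub_range (Simple : Set (ExteriorAlgebra F (Fin 6 → F)))
    (hSimple : Simple = {x | x ≠ 0 ∧ ∃ v₁ v₂ v₃ : Fin 6 → F,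
      x = ι F v₁ * ι F v₂ * ι F v₃}) : Simple ⊆ Set.range (wedge3 F) := by
  rintro x hx
  rw [hSimple] at hx
  obtain ⟨-, v₁, v₂, v₃, rfl⟩ := hx
  exact ⟨![v₁, v₂, v₃], by simp [wedge3]⟩

lemma simple_count [Fintype F] (Simple : Set (ExteriorAlgebra F (Fin 6 → F)))
    (hSimple : Simple = {x | x ≠ 0 ∧ ∃ v₁ v₂ v₃ : Fin 6 → F,
      x = ι F v₁ * ι F v₂ * ι F v₃}) :
    Simple.ncard * Nat.card (GL (Fin 3) F) ≤
      (Fintype.card F - 1) * Nat.card {s : Fin 3 → (Fin 6 → F) // LinearIndependent F s} := by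
  classical
  have hSfin : Simple.Finite := ((Set.finite_range (wedge3 F)).subset
    (simple_sub_range Simple hSimple))
  haveI ft : Fintype ↥Simple := hSfin.fintype
  have hne : ∀ ω : ↥Simple, (ω : ExteriorAlgebra F (Fin 6 → F)) ≠ 0 := by
    intro ω; exact ((Set.ext_iff.mp hSimple _).mp ω.2).1
  have hwitex : ∀ ω : ↥Simple, ∃ v : Fin 3 → (Fin 6 → F),
      LinearIndependent F v ∧ wedge3 F v = ↑ω := by
    intro ω
    obtain ⟨h0, v₁, v₂, v₃, hx⟩ := (Set.ext_iff.mp hSimple _).mp ω.2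
    refine ⟨![v₁, v₂, v₃], ?_, ?_⟩
    · apply linearIndependent_of_wedge3
      simp only [wedge3]
      simp only [Matrix.cons_val_zero, Matrix.cons_val_one, Matrix.head_cons,
        Matrix.cons_val_two, Matrix.tail_cons]
      rw [← hx]; exact h0
    · simp only [wedge3, Matrix.cons_val_zero, Matrix.cons_val_one, Matrix.head_cons,
        Matrix.cons_val_two, Matrix.tail_cons]
      exact hx.symm
  choose wit hwit1 hwit2 using hwitex
  have hdetne : ∀ g : GL (Fin 3) F, ((g : Matrix (Fin 3) (Fin 3) F)).det ≠ 0 := by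
    intro g
    exact ((Matrix.isUnit_iff_isUnit_det _).mp g.isUnit).ne_zero
  set f : GL (Fin 3) F × ↥Simple → {s : Fin 3 → (Fin 6 → F) // LinearIndependent F s} :=
    fun p => ⟨act (p.1 : Matrix (Fin 3) (Fin 3) F) (wit p.2), by
      apply linearIndependent_of_wedge3
      rw [wedge3_act, hwit2]
      exact smul_ne_zero (hdetne p.1) (hne p.2)⟩ with hf
  have hwedgef : ∀ p : GL (Fin 3) F × ↥Simple,
      wedge3 F (f p).val
        = ((p.1 : Matrix (Fin 3) (Fin 3) F)).det • (p.2 : ExteriorAlgebra F _) := by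
    intro p
    show wedge3 F (act (p.1 : Matrix (Fin 3) (Fin 3) F) (wit p.2)) = _
    rw [wedge3_act, hwit2]
  have hmain : Fintype.card (GL (Fin 3) F × ↥Simple) ≤
      (Fintype.card F - 1) * Fintype.card {s : Fin 3 → (Fin 6 → F) // LinearIndependent F s} := by
    rw [← Finset.card_univ (α := GL (Fin 3) F × ↥Simple),
      ← Finset.card_univ (α := {s : Fin 3 → (Fin 6 → F) // LinearIndependent F s})]
    apply Finset.card_le_mul_card_image_of_maps_to (f := f) (fun a _ => Finset.mem_univ _)
    intro b _
    rw [← Fintype.card_units (α := F), ← Finset.card_univ (α := Fˣ)]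
    apply Finset.card_le_card_of_injOn (fun p => Matrix.GeneralLinearGroup.det p.1)
      (fun _ _ => Finset.mem_univ _)
    intro p₁ h₁ p₂ h₂ hdeq
    simp only [Finset.mem_coe, Finset.mem_filter] at h₁ h₂
    have hb₁ : f p₁ = b := h₁.2
    have hb₂ : f p₂ = b := h₂.2
    have hdet : ((p₁.1 : Matrix (Fin 3) (Fin 3) F)).det
        = ((p₂.1 : Matrix (Fin 3) (Fin 3) F)).det := by
      exact congrArg Units.val hdeq
    have hw₁ := hwedgef p₁
    have hw₂ := hwedgef p₂
    rw [hb₁] at hw₁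
    rw [hb₂] at hw₂
    have hωeq : (p₁.2 : ExteriorAlgebra F (Fin 6 → F))
        = (p₂.2 : ExteriorAlgebra F (Fin 6 → F)) := by
      have : ((p₁.1 : Matrix (Fin 3) (Fin 3) F)).det • (p₁.2 : ExteriorAlgebra F (Fin 6 → F))
          = ((p₁.1 : Matrix (Fin 3) (Fin 3) F)).det • (p₂.2 : ExteriorAlgebra F (Fin 6 → F)) := by
        rw [← hw₁, hdet, ← hw₂]
      exact smul_right_injective _ (hdetne p₁.1) this
    have hs : p₁.2 = p₂.2 := Subtype.ext hωeq
    have hg : p₁.1 = p₂.1 := by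
      have hact : act (p₁.1 : Matrix (Fin 3) (Fin 3) F) (wit p₁.2)
          = act (p₂.1 : Matrix (Fin 3) (Fin 3) F) (wit p₁.2) := by
        have e₁ : (f p₁).val = act (p₁.1 : Matrix (Fin 3) (Fin 3) F) (wit p₁.2) := rfl
        have e₂ : (f p₂).val = act (p₂.1 : Matrix (Fin 3) (Fin 3) F) (wit p₂.2) := rfl
        rw [hb₁] at e₁
        rw [hb₂] at e₂
        rw [← e₁, e₂, hs]
      exact Units.ext (act_inj (hwit1 p₁.2) hact)
    exact Prod.ext hg hs
  rw [Fintype.card_prod] at hmain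
  rw [Set.ncard_eq_toFinset_card' Simple, Set.toFinset_card, Nat.card_eq_fintype_card,
    Nat.card_eq_fintype_card]
  rw [mul_comm]
  exact hmain

/-- The 20 increasing triples in `Fin 6`. -/
def L20 : Fin 20 → Fin 3 → Fin 6 :=
  ![![0,1,2], ![0,1,3], ![0,1,4], ![0,1,5], ![0,2,3], ![0,2,4], ![0,2,5],
    ![0,3,4], ![0,3,5], ![0,4,5], ![1,2,3], ![1,2,4], ![1,2,5], ![1,3,4],
    ![1,3,5], ![1,4,5], ![2,3,4], ![2,3,5], ![2,4,5], ![3,4,5]]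

lemma L20_inj : ∀ k : Fin 20, ∀ a b : Fin 3, L20 k a = L20 k b → a = b := by decide

lemma L20_miss : ∀ k l : Fin 20, k ≠ l → ∃ a : Fin 3, ∀ b : Fin 3, L20 k b ≠ L20 l a := by
  decide

/-- Triple of standard basis vectors indexed by a triple of indices. -/
def bv (F : Type*) [Field F] (I : Fin 3 → Fin 6) : Fin 3 → (Fin 6 → F) :=
  fun a => Pi.single (I a) 1

noncomputable def phi (F : Type*) [Field F] (I : Fin 3 → Fin 6) :
    ExteriorAlgebra F (Fin 6 → F) →ₗ[F] F :=
  liftAlternating fun n => match n with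
    | 3 => (Matrix.detRowAlternating :
        (Fin 3 → F) [⋀^Fin 3]→ₗ[F] F).compLinearMap (LinearMap.funLeft F F I)
    | _ => 0

lemma phi_apply (I : Fin 3 → Fin 6) (v : Fin 3 → (Fin 6 → F)) :
    phi F I (ιMulti F 3 v) = Matrix.det (Matrix.of fun a b => v a (I b)) := by
  rw [phi, liftAlternating_apply_ιMulti]
  rfl

lemma phi_bv (k l : Fin 20) :
    phi F (L20 k) (ιMulti F 3 (bv F (L20 l))) = if k = l then 1 else 0 := by
  rw [phi_apply]
  split_ifs with h
  · subst h
    have : (Matrix.of fun a b => bv F (L20 k) a (L20 k b)) = (1 : Matrix (Fin 3) (Fin 3) F) := by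
      ext a b
      simp only [Matrix.of_apply, bv, Pi.single_apply, Matrix.one_apply]
      by_cases hab : a = b
      · simp [hab]
      · rw [if_neg (show ¬(L20 k b = L20 k a) from fun he => hab (L20_inj k a b he.symm)),
          if_neg hab]
    rw [this, Matrix.det_one]
  · obtain ⟨a, ha⟩ := L20_miss k l h
    apply Matrix.det_eq_zero_of_row_eq_zero a
    intro b
    simp only [Matrix.of_apply, bv, Pi.single_apply]
    rw [if_neg (ha b)]

lemma indep20 : LinearIndependent F (fun k : Fin 20 => ιMulti F 3 (bv F (L20 k))) := by
  rw [Fintype.linearIndependent_iff]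
  intro c hc j
  have := congrArg (phi F (L20 j)) hc
  rw [map_sum, map_zero] at this
  simp only [map_smul, phi_bv, smul_eq_mul, mul_ite, mul_one, mul_zero] at this
  rw [Finset.sum_ite_eq] at this
  simpa using this

end Aux

section Arith

lemma arith_S_le_B {q S : ℕ} (hq : 2 ≤ q)
    (h : S * ((q^3 - 1) * (q^3 - q) * (q^3 - q^2)) ≤
      (q - 1) * ((q^6 - 1) * (q^6 - q) * (q^6 - q^2))) :
    S ≤ q^10 + q^8 + q^7 := by
  have hq1 : 1 ≤ q := by omega
  have p1 : 1 ≤ q ^ 3 := Nat.one_le_pow _ _ (by omega)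
  have p2 : q ≤ q ^ 3 := by calc q = q^1 := (pow_one q).symm
                                 _ ≤ q^3 := Nat.pow_le_pow_right hq1 (by omega)
  have p3 : q^2 ≤ q^3 := Nat.pow_le_pow_right hq1 (by omega)
  have p4 : 1 ≤ q ^ 6 := Nat.one_le_pow _ _ (by omega)
  have p5 : q ≤ q ^ 6 := by calc q = q^1 := (pow_one q).symm
                                 _ ≤ q^6 := Nat.pow_le_pow_right hq1 (by omega)
  have p6 : q^2 ≤ q^6 := Nat.pow_le_pow_right hq1 (by omega)
  have hGLpos : 0 < (q^3 - 1) * (q^3 - q) * (q^3 - q^2) := by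
    have s1 : 0 < q^3 - 1 := by
      have : 1 < q^3 := by calc 1 < q := hq
                                _ = q^1 := (pow_one q).symm
                                _ ≤ q^3 := Nat.pow_le_pow_right hq1 (by omega)
      omega
    have s2 : 0 < q^3 - q := by
      have : q^1 < q^3 := Nat.pow_lt_pow_right hq (by omega)
      rw [pow_one] at this
      omega
    have s3 : 0 < q^3 - q^2 := by
      have : q^2 < q^3 := Nat.pow_lt_pow_right hq (by omega)
      omega
    positivity
  have h2 : (q - 1) * ((q^6 - 1) * (q^6 - q) * (q^6 - q^2)) ≤
      (q^10 + q^8 + q^7) * ((q^3 - 1) * (q^3 - q) * (q^3 - q^2)) := by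
    zify [hq1, p1, p2, p3, p4, p5, p6]
    have hqz : (2:ℤ) ≤ (q:ℤ) := by exact_mod_cast hq
    have key : ((q:ℤ)^10 + q^8 + q^7) * (((q:ℤ)^3 - 1) * ((q:ℤ)^3 - q) * ((q:ℤ)^3 - q^2))
        - ((q:ℤ) - 1) * (((q:ℤ)^6 - 1) * ((q:ℤ)^6 - q) * ((q:ℤ)^6 - q^2))
        = ((q:ℤ)^3 + q^2 + 1) * ((q:ℤ) - 1) * ((q:ℤ)^3 * ((q:ℤ)^3 - 1) * ((q:ℤ)^2 - 1)) := by
      ring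
    have f1 : (0:ℤ) ≤ (q:ℤ)^3 + q^2 + 1 := by positivity
    have f2 : (0:ℤ) ≤ (q:ℤ) - 1 := by linarith
    have f3 : (0:ℤ) ≤ (q:ℤ)^3 - 1 := by nlinarith
    have f4 : (0:ℤ) ≤ (q:ℤ)^2 - 1 := by nlinarith
    have f5 : (0:ℤ) ≤ (q:ℤ)^3 := by positivity
    nlinarith [mul_nonneg (mul_nonneg f1 f2) (mul_nonneg (mul_nonneg f5 f3) f4)]
  have := h.trans h2
  exact Nat.le_of_mul_le_mul_right this hGLpos

lemma arith_final {q S : ℕ} (hq : 2 ≤ q) (hS : S ≤ q^10 + q^8 + q^7) :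
    1 + S + (S + 1).choose 2 < q ^ 20 := by
  have hch : (S + 1).choose 2 = (S + 1) * S / 2 := by
    rw [Nat.choose_two_right]; simp
  have hdvd : 2 ∣ (S + 1) * S := by
    rw [mul_comm]; exact (Nat.even_mul_succ_self S).two_dvd
  have h2 : 2 * ((S + 1) * S / 2) = (S + 1) * S := Nat.mul_div_cancel' hdvd
  set B := q^10 + q^8 + q^7 with hB
  have hmono : (S + 1) * S ≤ (B + 1) * B :=
    Nat.mul_le_mul (by omega) hS
  obtain ⟨m, rfl⟩ : ∃ m, q = m + 2 := ⟨q - 2, by omega⟩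
  have key : 2 * (m + 2) ^ 20 =
      ((B + 1) * B + 2 * B + 2) +
      (110462 + 2388672*m + 16739360*m^2 + 64548976*m^3 + 164142616*m^4 + 300818244*m^5
        + 418170918*m^6 + 455269005*m^7 + 396328481*m^8 + 279579396*m^9 + 161086637*m^10
        + 76078080*m^11 + 29439332*m^12 + 9292700*m^13 + 2371299*m^14 + 481950*m^15
        + 76227*m^16 + 9046*m^17 + 758*m^18 + 40*m^19 + m^20) := by
    rw [hB]; ring
  omega

end Arith

/-- Let `q` be a prime power, `W = F_q^6` the natural module for
`SL₆(q)`, and `V = Λ³W` of dimension `20`.  The number of vectors expressible as a sum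
of at most two nonzero simple wedges `v₁ ∧ v₂ ∧ v₃` is strictly less than `q^20`.
Consequently, not every element of `Λ³W` is a sum of at most two simple wedges. -/
theorem stmt12 (F : Type*) [Field F] [Fintype F]
    (Simple : Set (ExteriorAlgebra F (Fin 6 → F)))
    (hSimple : Simple = {x | x ≠ 0 ∧ ∃ v₁ v₂ v₃ : Fin 6 → F,
      x = ι F v₁ * ι F v₂ * ι F v₃})
    (T : Set (ExteriorAlgebra F (Fin 6 → F)))
    (hT : T = {0} ∪ Simple ∪ {x | ∃ s ∈ Simple, ∃ t ∈ Simple, x = s + t}) :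
    T.ncard < (Fintype.card F) ^ 20 ∧
      ∃ x : ⋀[F]^3 (Fin 6 → F), (x : ExteriorAlgebra F (Fin 6 → F)) ∉ T := by
  classical
  set q := Fintype.card F with hqdef
  have hq : 2 ≤ q := Fintype.one_lt_card
  -- cardinality computations
  have hGL : Nat.card (GL (Fin 3) F) = (q^3 - 1) * (q^3 - q) * (q^3 - q^2) := by
    rw [Matrix.card_GL_field, Fin.prod_univ_three]
    norm_num
    rfl
  have hfinrank : Module.finrank F (Fin 6 → F) = 6 := by
    simp [Module.finrank_fintype_fun_eq_card]
  have hX : Nat.card {s : Fin 3 → (Fin 6 → F) // LinearIndependent F s}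
      = (q^6 - 1) * (q^6 - q) * (q^6 - q^2) := by
    rw [card_linearIndependent (K := F) (V := Fin 6 → F) (k := 3) (by rw [hfinrank]; omega)]
    rw [Fin.prod_univ_three, hfinrank]
    norm_num
    rfl
  -- the bound on the number of simple wedges
  have hScount := simple_count Simple hSimple
  rw [hGL, hX] at hScount
  have hSB : Simple.ncard ≤ q^10 + q^8 + q^7 := arith_S_le_B hq hScount
  -- finiteness
  have hSfin : Simple.Finite := ((Set.finite_range (wedge3 F)).subset
    (simple_sub_range Simple hSimple))
  haveI ftS : Fintype ↥Simple := hSfin.fintype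
  have hScard : Simple.ncard = Fintype.card ↥Simple := by
    rw [Set.ncard_eq_toFinset_card' Simple, Set.toFinset_card]
  -- the set of sums of two simple wedges
  set P : Set (ExteriorAlgebra F (Fin 6 → F)) := {x | ∃ s ∈ Simple, ∃ t ∈ Simple, x = s + t}
    with hP
  set g : Sym2 ↥Simple → ExteriorAlgebra F (Fin 6 → F) :=
    Sym2.lift ⟨fun a b => (a : ExteriorAlgebra F (Fin 6 → F)) + b,
      fun a b => add_comm _ _⟩ with hg
  have hPsub : P ⊆ Set.range g := by
    rintro x ⟨s, hs, t, ht, rfl⟩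
    exact ⟨s(⟨s, hs⟩, ⟨t, ht⟩), by simp [hg]⟩
  have hPfin : P.Finite := (Set.finite_range g).subset hPsub
  have hPcard : P.ncard ≤ (Simple.ncard + 1).choose 2 := by
    calc P.ncard ≤ (Set.range g).ncard :=
          Set.ncard_le_ncard hPsub (Set.finite_range g)
      _ = (g '' Set.univ).ncard := by rw [Set.image_univ]
      _ ≤ (Set.univ : Set (Sym2 ↥Simple)).ncard := Set.ncard_image_le Set.finite_univ
      _ = Fintype.card (Sym2 ↥Simple) := by
          rw [Set.ncard_univ, Nat.card_eq_fintype_card]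
      _ = (Fintype.card ↥Simple + 1).choose 2 := Sym2.card
      _ = (Simple.ncard + 1).choose 2 := by rw [hScard]
  -- total bound on T
  have hTfin : T.Finite := by
    rw [hT]
    exact ((Set.finite_singleton 0).union hSfin).union hPfin
  have hT1 : T.ncard < q ^ 20 := by
    have hle : T.ncard ≤ 1 + Simple.ncard + P.ncard := by
      rw [hT]
      calc ({0} ∪ Simple ∪ P).ncard ≤ ({0} ∪ Simple).ncard + P.ncard :=
            Set.ncard_union_le _ _
        _ ≤ (Set.ncard {0} + Simple.ncard) + P.ncard :=
            Nat.add_le_add_right (Set.ncard_union_le _ _) _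
        _ = 1 + Simple.ncard + P.ncard := by rw [Set.ncard_singleton]
    have : T.ncard ≤ 1 + Simple.ncard + (Simple.ncard + 1).choose 2 :=
      hle.trans (by omega)
    calc T.ncard ≤ 1 + Simple.ncard + (Simple.ncard + 1).choose 2 := this
      _ < q ^ 20 := arith_final hq hSB
  refine ⟨hT1, ?_⟩
  -- the 20-dimensional span of basic wedges
  by_contra hno
  push_neg at hno
  set Sp : Submodule F (ExteriorAlgebra F (Fin 6 → F)) :=
    Submodule.span F (Set.range fun k : Fin 20 => ιMulti F 3 (bv F (L20 k))) with hSp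
  have hSple : Sp ≤ ⋀[F]^3 (Fin 6 → F) := by
    rw [hSp, Submodule.span_le]
    rintro _ ⟨k, rfl⟩
    exact ExteriorAlgebra.ιMulti_range F 3 ⟨_, rfl⟩
  haveI : Module.Finite F ↥Sp :=
    FiniteDimensional.span_of_finite F (Set.finite_range _)
  haveI : Finite ↥Sp := Module.finite_of_finite F
  letI : Fintype ↥Sp := Fintype.ofFinite _
  have hSpcard : Fintype.card ↥Sp = q ^ 20 := by
    rw [Module.card_eq_pow_finrank (K := F) (V := ↥Sp), hSp,
      finrank_span_eq_card (indep20 (F := F))]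
    norm_num
    rfl
  have hsub : (Sp : Set (ExteriorAlgebra F (Fin 6 → F))) ⊆ T := by
    intro y hy
    exact hno ⟨y, hSple hy⟩
  have hc : (Sp : Set (ExteriorAlgebra F (Fin 6 → F))).ncard ≤ T.ncard :=
    Set.ncard_le_ncard hsub hTfin
  have hc2 : (Sp : Set (ExteriorAlgebra F (Fin 6 → F))).ncard = q ^ 20 := by
    rw [← Nat.card_coe_set_eq, Nat.card_eq_fintype_card]
    exact hSpcard
  omega
end

section
/- Let q₀ ≥ 2 be a prime power and k ≥ 60 a real number. Then log_{q₀}(1 + (q₀−1)k + ((q₀−1)k)²) ≤ log₂(1 + k + k²). In other words, the function q₀ ↦ log_{q₀}(1 + (q₀−1)k + ((q₀−1)k)²) is maximized at q₀ = 2 over prime powers q₀. -/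
/-!
Since `1 + x + x² ≤ (x + k)²` for `x ≥ 0` and `k ≥ 1`, the left side is at most
`2 logb q₀ (q₀ k) = 2 (1 + logb q₀ k)`, while the right side is at least `2 logb 2 k`.
For `q₀ ≥ 3 > e` and `k ≥ 60 > e⁴` we have `1 + log k / log q₀ ≤ 1 + log k ≤ log k / log 2`;
for `q₀ = 2` both sides coincide.
-/

open Real

lemma one_add_add_sq_le_add_sq {x y : ℝ} (hx : 0 ≤ x) (hy : 1 ≤ y) :
    1 + x + x ^ 2 ≤ (x + y) ^ 2 := by
  nlinarith

lemma Real.exp_four_lt_sixty : exp 4 < 60 := by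
  have h : exp 4 = exp 1 ^ 4 := by rw [← exp_nat_mul]; norm_num
  rw [h]
  calc exp 1 ^ 4 < 2.7182818286 ^ 4 := by gcongr; exact exp_one_lt_d9
    _ < 60 := by norm_num

lemma Real.logb_one_add_add_sq_le {q k : ℝ} (hq : 1 < q) (hk : 1 ≤ k) :
    logb q (1 + (q - 1) * k + ((q - 1) * k) ^ 2) ≤ 2 * (1 + logb q k) := by
  have hx : 0 ≤ (q - 1) * k := mul_nonneg (by linarith) (by linarith)
  calc logb q (1 + (q - 1) * k + ((q - 1) * k) ^ 2)
      ≤ logb q ((q * k) ^ 2) := by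
        apply logb_le_logb_of_le hq (by positivity)
        convert one_add_add_sq_le_add_sq hx hk using 2
        ring
    _ = 2 * (1 + logb q k) := by
        rw [logb_pow, logb_mul (by positivity) (by positivity), logb_self_eq_one hq]
        norm_num

lemma Real.two_mul_logb_le_logb_one_add_add_sq {b k : ℝ} (hb : 1 < b) (hk : 0 < k) :
    2 * logb b k ≤ logb b (1 + k + k ^ 2) := by
  calc 2 * logb b k = logb b (k ^ 2) := by rw [logb_pow]; norm_num
    _ ≤ logb b (1 + k + k ^ 2) := logb_le_logb_of_le hb (by positivity) (by linarith)

lemma Real.one_add_logb_le_logb_two {q k : ℝ} (hq : exp 1 ≤ q) (hk : exp 4 ≤ k) :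
    1 + logb q k ≤ logb 2 k := by
  have hlogq : 1 ≤ log q := by rwa [le_log_iff_exp_le ((exp_pos 1).trans_le hq)]
  have hlogk : 4 ≤ log k := by rwa [le_log_iff_exp_le ((exp_pos 4).trans_le hk)]
  have hlog2 : 0 < log 2 := log_pos one_lt_two
  have hlogb : logb q k ≤ log k := div_le_self (by linarith) hlogq
  have hkey : 1 + log k ≤ logb 2 k := by
    rw [logb, le_div_iff₀ hlog2]
    nlinarith [log_two_lt_d9]
  linarith

theorem stmt16_general (q₀ : ℕ) (hq2 : 2 ≤ q₀) (k : ℝ) (hk : 60 ≤ k) :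
    Real.logb q₀ (1 + ((q₀ : ℝ) - 1) * k + (((q₀ : ℝ) - 1) * k) ^ 2) ≤
      Real.logb 2 (1 + k + k ^ 2) := by
  rcases hq2.eq_or_lt with rfl | hq3
  · norm_num
  have hq : exp 1 ≤ q₀ := by
    have : (3 : ℝ) ≤ q₀ := by exact_mod_cast hq3
    linarith [exp_one_lt_d9]
  have hk4 : exp 4 ≤ k := exp_four_lt_sixty.le.trans hk
  calc logb q₀ (1 + ((q₀ : ℝ) - 1) * k + (((q₀ : ℝ) - 1) * k) ^ 2)
      ≤ 2 * (1 + logb q₀ k) :=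
        logb_one_add_add_sq_le (one_lt_exp_iff.2 one_pos |>.trans_le hq) (by linarith)
    _ ≤ 2 * logb 2 k := by gcongr; exact one_add_logb_le_logb_two hq hk4
    _ ≤ logb 2 (1 + k + k ^ 2) :=
        two_mul_logb_le_logb_one_add_add_sq one_lt_two (by linarith)

/-- Let `q₀ ≥ 2` be a prime power and `k ≥ 60` a real number.  Then
`log_{q₀}(1 + (q₀−1)k + ((q₀−1)k)²) ≤ log₂(1 + k + k²)`; i.e. the function
`q₀ ↦ log_{q₀}(1 + (q₀−1)k + ((q₀−1)k)²)` is maximized at `q₀ = 2`. -/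
theorem stmt16 (q₀ : ℕ) (hq : IsPrimePow q₀) (hq2 : 2 ≤ q₀) (k : ℝ) (hk : 60 ≤ k) :
    Real.logb q₀ (1 + ((q₀ : ℝ) - 1) * k + (((q₀ : ℝ) - 1) * k) ^ 2) ≤
      Real.logb 2 (1 + k + k ^ 2) :=
  stmt16_general q₀ hq2 k hk
end
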